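/- arXiv:1807.07783 — 3 statements merged into one kernel-verified Lean document; each statement's English description precedes it below -/
import Mathlib

section
/- If m and m' are distinct positive integers with m > N/z, m' > N/z, P⁻(m) > z and P⁻(m') > z (where P⁻ denotes the smallest prime factor and z > 1 is real), then lcm(m, m') > N. -/
/-!
If `m' ∤ m`, then `lcm m m' = m · (m' / gcd m m')` with a cofactor `m' / gcd m m' ≠ 1` dividing
`m'`, hence at least `P⁻(m')`; so `lcm m m' ≥ m · P⁻(m') > (N / z) · z = N`. Since `m ≠ m'`, one of
`m' ∤ m`, `m ∤ m'` holds, and the two cases are symmetric.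
-/

theorem Nat.mul_minFac_le_lcm {m n : ℕ} (hn : n ≠ 0) (hdvd : ¬n ∣ m) :
    m * n.minFac ≤ m.lcm n := by
  have hgcd : m.gcd n ∣ n := Nat.gcd_dvd_right m n
  have hcof_dvd : n / m.gcd n ∣ n := Nat.div_dvd_of_dvd hgcd
  have hcof_ne_zero : n / m.gcd n ≠ 0 := fun h => hn (Nat.eq_zero_of_zero_dvd (h ▸ hcof_dvd))
  have hcof_ne_one : n / m.gcd n ≠ 1 := fun h =>
    hdvd (Nat.eq_of_dvd_of_div_eq_one hgcd h ▸ Nat.gcd_dvd_left m n)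
  calc m * n.minFac
      ≤ m * (n / m.gcd n) := Nat.mul_le_mul_left m
        (Nat.minFac_le_of_dvd ((Nat.two_le_iff _).mpr ⟨hcof_ne_zero, hcof_ne_one⟩) hcof_dvd)
    _ = m.lcm n := (Nat.mul_div_assoc m hgcd).symm

theorem lt_mul_of_div_lt_of_lt {N a p z : ℝ} (hz : 0 < z) (ha : N / z < a) (hp : z < p)
    (ha₀ : 0 ≤ a) : N < a * p :=
  calc N < a * z := (div_lt_iff₀ hz).mp ha
    _ ≤ a * p := mul_le_mul_of_nonneg_left hp.le ha₀

theorem stmt_0_general (N : ℕ) (z : ℝ) (hz : 1 < z)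
    (m m' : ℕ) (hne : m ≠ m')
    (h1 : (N : ℝ) / z < m) (h2 : (N : ℝ) / z < m')
    (h3 : z < (m.minFac : ℝ)) (h4 : z < (m'.minFac : ℝ)) :
    (N : ℝ) < (Nat.lcm m m' : ℝ) := by
  wlog hdvd : ¬m' ∣ m generalizing m m'
  · rw [Nat.lcm_comm]
    exact this m' m hne.symm h2 h1 h4 h3 fun h => hne (Nat.dvd_antisymm (not_not.mp hdvd) h).symm
  have hz₀ : 0 < z := by linarith
  have hm' : m' ≠ 0 := by
    rintro rfl
    have : (0 : ℝ) ≤ N / z := by positivity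
    simp only [Nat.cast_zero] at h2
    linarith
  calc (N : ℝ) < m * m'.minFac := lt_mul_of_div_lt_of_lt hz₀ h1 h4 (Nat.cast_nonneg m)
    _ ≤ m.lcm m' := by exact_mod_cast Nat.mul_minFac_le_lcm hm' hdvd

theorem stmt_0 (N : ℕ) (hN : 0 < N) (z : ℝ) (hz : 1 < z)
    (m m' : ℕ) (hm : 2 ≤ m) (hm' : 2 ≤ m') (hne : m ≠ m')
    (h1 : (N : ℝ) / z < m) (h2 : (N : ℝ) / z < m')
    (h3 : z < (m.minFac : ℝ)) (h4 : z < (m'.minFac : ℝ)) :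
    (N : ℝ) < (Nat.lcm m m' : ℝ) :=
  stmt_0_general N z hz m m' hne h1 h2 h3 h4
end

section
/- For distinct integers m ≠ m' with m, m' ≥ 2, one has lcm(m, m') ≥ min(m · P⁻(m'), m' · P⁻(m)), where P⁻(n) denotes the smallest prime factor of n. -/
theorem stmt_1 (m m' : ℕ) (hm : 2 ≤ m) (hm' : 2 ≤ m') (hne : m ≠ m') :
    min (m * m'.minFac) (m' * m.minFac) ≤ Nat.lcm m m' := by
  have hm0 : 0 < m := by omega
  have hm'0 : 0 < m' := by omega
  by_cases hdvd : m ∣ m'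
  · -- lcm = m', and m' = m * k with k ≥ minFac m'
    obtain ⟨k, hk⟩ := hdvd
    have hk2 : 2 ≤ k := by
      rcases k with _ | _ | k
      · omega
      · omega
      · omega
    have hkdvd : k ∣ m' := ⟨m, by rw [hk]; ring⟩
    have h1 : m'.minFac ≤ k := Nat.minFac_le_of_dvd hk2 hkdvd
    have hlcm : Nat.lcm m m' = m' :=
      Nat.dvd_antisymm (Nat.lcm_dvd ⟨k, hk⟩ dvd_rfl) (Nat.dvd_lcm_right _ _)
    calc min (m * m'.minFac) (m' * m.minFac) ≤ m * m'.minFac := min_le_left _ _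
      _ ≤ m * k := Nat.mul_le_mul_left m h1
      _ = m' := hk.symm
      _ = Nat.lcm m m' := hlcm.symm
  · -- lcm = m' * (m / gcd), and m / gcd ≥ minFac m
    set d := Nat.gcd m m' with hd
    have hd0 : 0 < d := Nat.gcd_pos_of_pos_left _ hm0
    have hddvd : d ∣ m := Nat.gcd_dvd_left _ _
    have hq : m / d ∣ m := Nat.div_dvd_of_dvd hddvd
    obtain ⟨q, hqq⟩ := id hddvd
    have hqeq : m / d = q := by rw [hqq, Nat.mul_div_cancel_left _ hd0]
    have hq2 : 2 ≤ m / d := by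
      rw [hqeq]
      have h0 : q ≠ 0 := by rintro rfl; omega
      have h1 : q ≠ 1 := by
        rintro rfl
        rw [mul_one] at hqq
        exact hdvd (hqq ▸ Nat.gcd_dvd_right m m')
      omega
    have h1 : m.minFac ≤ m / d := Nat.minFac_le_of_dvd hq2 hq
    have hlcm : Nat.lcm m m' = m' * (m / d) := by
      rw [Nat.lcm, Nat.mul_comm m m', Nat.mul_div_assoc m' hddvd]
    calc min (m * m'.minFac) (m' * m.minFac) ≤ m' * m.minFac := min_le_right _ _
      _ ≤ m' * (m / d) := Nat.mul_le_mul_left m' h1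
      _ = Nat.lcm m m' := hlcm.symm
end

section
/- Let N ≥ 1 and let A be a partition of {1,...,N} into paths of the divisor graph with the minimal possible number of paths F(N). Let n ≤ N be factorizing for A, i.e., every path of A containing a multiple of n consists entirely of multiples of n. Then the paths of A containing multiples of n are exactly of the form n·D₁, ..., n·D_g where D₁, ..., D_g is a partition of {1, ..., ⌊N/n⌋} into paths of the divisor graph with g = F(⌊N/n⌋), the minimal possible number. -/
/-- A path of the divisor graph. -/
def IsDivPath (l : List ℕ) : Prop :=
  l ≠ [] ∧ l.Nodup ∧ (∀ x ∈ l, 0 < x) ∧ l.Chain' (fun a b => a ∣ b ∨ b ∣ a)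

/-- A partition of `{1,...,N}` into paths of the divisor graph. -/
def IsPathPartition (N : ℕ) (P : List (List ℕ)) : Prop :=
  (∀ l ∈ P, IsDivPath l) ∧
  P.Pairwise (fun l m => ∀ x ∈ l, x ∉ m) ∧
  (∀ x : ℕ, (1 ≤ x ∧ x ≤ N) ↔ ∃ l ∈ P, x ∈ l)

/-- `F N` is the minimal number of paths in a partition of `{1,...,N}` into
paths of the divisor graph. -/
noncomputable def F (N : ℕ) : ℕ :=
  sInf {k | ∃ P : List (List ℕ), IsPathPartition N P ∧ P.length = k}

/-! If `n` is factorizing for `A`, the paths of `A` through multiples of `n` are `n • D` for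
a path partition `D` of `{1,…,N/n}`, so `F (N/n) ≤ |D|`. Conversely, replacing them by `n • P`
for an optimal partition `P` of `{1,…,N/n}` gives a partition of `{1,…,N}`, so the optimality
of `A` forces `|D| ≤ F (N/n)`. -/

def IsPathPartitionOn (S : Set ℕ) (P : List (List ℕ)) : Prop :=
  (∀ l ∈ P, IsDivPath l) ∧
  P.Pairwise (fun l m => ∀ x ∈ l, x ∉ m) ∧
  ∀ x, x ∈ S ↔ ∃ l ∈ P, x ∈ l

theorem isPathPartition_iff_isPathPartitionOn {N : ℕ} {P : List (List ℕ)} :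
    IsPathPartition N P ↔ IsPathPartitionOn (Set.Icc 1 N) P :=
  Iff.rfl

theorem isDivPath_map_mul_iff {n : ℕ} (hn : 0 < n) {l : List ℕ} :
    IsDivPath (l.map (n * ·)) ↔ IsDivPath l := by
  have hinj : Function.Injective (n * ·) := mul_right_injective₀ hn.ne'
  unfold IsDivPath List.Chain'
  simp only [ne_eq, List.map_eq_nil_iff, List.nodup_map_iff hinj, List.forall_mem_map,
    List.isChain_map, Nat.mul_dvd_mul_iff_left hn, Nat.mul_pos_iff_of_pos_left hn]

namespace IsPathPartitionOn

variable {S T : Set ℕ} {P Q : List (List ℕ)}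

theorem map_mul_iff {n : ℕ} (hn : 0 < n) :
    IsPathPartitionOn ((n * ·) '' S) (P.map (List.map (n * ·))) ↔ IsPathPartitionOn S P := by
  have hinj : Function.Injective (n * ·) := mul_right_injective₀ hn.ne'
  have hmem (y : ℕ) (l : List ℕ) : n * y ∈ l.map (n * ·) ↔ y ∈ l :=
    List.mem_map_of_injective hinj
  unfold IsPathPartitionOn
  refine and_congr ?_ (and_congr ?_ ?_)
  · simp only [List.forall_mem_map, isDivPath_map_mul_iff hn]
  · simp only [List.pairwise_map, List.forall_mem_map, hmem]
  · simp only [List.mem_map, exists_exists_and_eq_and]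
    refine ⟨fun h y => by simpa [hinj.mem_set_image, hn.ne'] using h (n * y), fun h x => ?_⟩
    constructor
    · rintro ⟨y, hy, rfl⟩
      simpa [hn.ne'] using (h y).1 hy
    · rintro ⟨l, hl, y, hyl, rfl⟩
      exact ⟨y, (h y).2 ⟨l, hl, hyl⟩, rfl⟩

theorem filter (h : IsPathPartitionOn S P) (p : List ℕ → Bool)
    (hp : ∀ l ∈ P, ∀ x ∈ l, x ∈ T ↔ p l) :
    IsPathPartitionOn (S ∩ T) (P.filter p) := by
  obtain ⟨hpath, hdisj, hcover⟩ := h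
  refine ⟨fun l hl => hpath l (List.mem_of_mem_filter hl), hdisj.filter p, fun x => ?_⟩
  simp only [Set.mem_inter_iff, hcover, List.mem_filter]
  constructor
  · rintro ⟨⟨l, hl, hxl⟩, hxT⟩
    exact ⟨l, ⟨hl, (hp l hl x hxl).1 hxT⟩, hxl⟩
  · rintro ⟨l, ⟨hl, hpl⟩, hxl⟩
    exact ⟨⟨l, hl, hxl⟩, (hp l hl x hxl).2 hpl⟩

theorem append (hP : IsPathPartitionOn S P) (hQ : IsPathPartitionOn T Q) (hST : Disjoint S T) :
    IsPathPartitionOn (S ∪ T) (P ++ Q) := by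
  obtain ⟨hPpath, hPdisj, hPcover⟩ := hP
  obtain ⟨hQpath, hQdisj, hQcover⟩ := hQ
  refine ⟨?_, List.pairwise_append.2 ⟨hPdisj, hQdisj, ?_⟩, fun x => ?_⟩
  · simpa only [List.mem_append, or_imp, forall_and] using ⟨hPpath, hQpath⟩
  · intro l hl m hm x hxl hxm
    exact hST.ne_of_mem ((hPcover x).2 ⟨l, hl, hxl⟩) ((hQcover x).2 ⟨m, hm, hxm⟩) rfl
  · simp only [Set.mem_union, hPcover, hQcover, List.mem_append, or_and_right, exists_or]

end IsPathPartitionOn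

theorem F_le_length {N : ℕ} {P : List (List ℕ)} (hP : IsPathPartition N P) : F N ≤ P.length :=
  Nat.sInf_le ⟨P, hP, rfl⟩

theorem exists_isPathPartition_length_eq_F {N : ℕ} {P : List (List ℕ)}
    (hP : IsPathPartition N P) : ∃ Q, IsPathPartition N Q ∧ Q.length = F N :=
  Nat.sInf_mem (s := {k | ∃ Q, IsPathPartition N Q ∧ Q.length = k}) ⟨P.length, P, hP, rfl⟩

theorem Icc_one_inter_setOf_dvd {N n : ℕ} (hn : 0 < n) :
    Set.Icc 1 N ∩ {x | n ∣ x} = (n * ·) '' Set.Icc 1 (N / n) := by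
  ext x
  simp only [Set.mem_inter_iff, Set.mem_Icc, Set.mem_ofPred_eq, Set.mem_image]
  constructor
  · rintro ⟨⟨hx1, hxN⟩, y, rfl⟩
    refine ⟨y, ⟨Nat.pos_of_mul_pos_left hx1, ?_⟩, rfl⟩
    rwa [Nat.le_div_iff_mul_le hn, mul_comm]
  · rintro ⟨y, ⟨hy1, hyN⟩, rfl⟩
    refine ⟨⟨Nat.mul_pos hn hy1, ?_⟩, dvd_mul_right n y⟩
    rw [Nat.le_div_iff_mul_le hn] at hyN
    linarith

theorem exists_map_map_mul_eq {n : ℕ} {B : List (List ℕ)}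
    (h : ∀ l ∈ B, ∀ x ∈ l, n ∣ x) :
    ∃ D : List (List ℕ), D.map (List.map (n * ·)) = B := by
  refine ⟨B.map (List.map (· / n)), ?_⟩
  rw [List.map_map]
  conv_rhs => rw [← List.map_id B]
  refine List.map_congr_left fun l hl => ?_
  rw [Function.comp_apply, List.map_map]
  conv_rhs => rw [← List.map_id l]
  exact List.map_congr_left fun x hx => Nat.mul_div_cancel' (h l hl x hx)

theorem stmt_15_general (N n : ℕ) (hn : 1 ≤ n)
    (A : List (List ℕ)) (hA : IsPathPartition N A) (hopt : A.length = F N)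
    (hfact : ∀ l ∈ A, (∃ x ∈ l, n ∣ x) → ∀ x ∈ l, n ∣ x) :
    ∃ D : List (List ℕ), IsPathPartition (N / n) D ∧ D.length = F (N / n) ∧
      (A.filter (fun l => decide (∃ x ∈ l, n ∣ x))).Perm
        (D.map (fun l => l.map (fun x => n * x))) := by
  set p : List ℕ → Bool := fun l => decide (∃ x ∈ l, n ∣ x)
  have hp (l : List ℕ) : p l = true ↔ ∃ x ∈ l, n ∣ x := decide_eq_true_iff
  have hdvd_iff : ∀ l ∈ A, ∀ x ∈ l, n ∣ x ↔ p l = true := fun l hl x hx =>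
    ⟨fun h => (hp l).2 ⟨x, hx, h⟩, fun h => hfact l hl ((hp l).1 h) x hx⟩
  have hAon := isPathPartition_iff_isPathPartitionOn.1 hA
  have hB : IsPathPartitionOn (Set.Icc 1 N ∩ {x | n ∣ x}) (A.filter p) := hAon.filter p hdvd_iff
  have hC : IsPathPartitionOn (Set.Icc 1 N ∩ {x | n ∣ x}ᶜ) (A.filter (! p ·)) :=
    hAon.filter _ fun l hl x hx => by simpa using (hdvd_iff l hl x hx).not
  obtain ⟨D, hDB⟩ := exists_map_map_mul_eq fun l hl =>
    hfact l (List.mem_of_mem_filter hl) ((hp l).1 (List.mem_filter.1 hl).2)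
  have hD : IsPathPartition (N / n) D := by
    rwa [Icc_one_inter_setOf_dvd hn, ← hDB, IsPathPartitionOn.map_mul_iff hn] at hB
  obtain ⟨P, hP, hPF⟩ := exists_isPathPartition_length_eq_F hD
  have hexchange : IsPathPartition N (A.filter (! p ·) ++ P.map (List.map (n * ·))) := by
    have hnP : IsPathPartitionOn (Set.Icc 1 N ∩ {x | n ∣ x}) (P.map (List.map (n * ·))) := by
      rw [Icc_one_inter_setOf_dvd hn, IsPathPartitionOn.map_mul_iff hn]
      exact hP
    rw [isPathPartition_iff_isPathPartitionOn,
      ← Set.inter_union_compl (Set.Icc 1 N) {x | n ∣ x}, Set.union_comm]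
    exact hC.append hnP (disjoint_compl_left.mono Set.inter_subset_right Set.inter_subset_right)
  have hlen := List.length_eq_length_filter_add p (l := A)
  have hFD := F_le_length hD
  have hFN := F_le_length hexchange
  rw [← hDB] at hlen
  simp only [List.length_append, List.length_map] at hlen hFD hFN
  exact ⟨D, hD, by omega, hDB ▸ List.Perm.refl _⟩

theorem stmt_15 (N n : ℕ) (hN : 1 ≤ N) (hn : 1 ≤ n) (hnN : n ≤ N)
    (A : List (List ℕ)) (hA : IsPathPartition N A) (hopt : A.length = F N)
    (hfact : ∀ l ∈ A, (∃ x ∈ l, n ∣ x) → ∀ x ∈ l, n ∣ x) :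
    ∃ D : List (List ℕ), IsPathPartition (N / n) D ∧ D.length = F (N / n) ∧
      (A.filter (fun l => decide (∃ x ∈ l, n ∣ x))).Perm
        (D.map (fun l => l.map (fun x => n * x))) :=
  stmt_15_general N n hn A hA hopt hfact
end
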